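/- For all indices i, j in {0,1,...,r}, the first-order differential operators satisfy the commutation relation D_j(m, l + 1_i, k+1) ∘ D_i(m, l, k) = D_i(m, l + 1_j, k+1) ∘ D_j(m, l, k), where for each index i the operator is D_i(m,l,k) = x(x-1)·d/dx − (k + m_1 + ... + m_i − l_i + l_{i+1} + i)(x−1) − k − 1, acting on polynomials in x. -/

import Mathlib

/-!
Each `D_i(m, l, k)` has the form `x(x-1)∂ - L` with `L = c_i(x-1) + k + 1`, and passing to
`(l + 1_j, k + 1)` raises `c_i` by `1` when `i ≠ j`. For two operators of this form,
`(x(x-1)∂ - L₂)(x(x-1)∂ - L₁) = x²(x-1)²∂² + x(x-1)(2x - 1 - L₁ - L₂)∂ + L₁L₂ - x(x-1)c₁`.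
With the shifted coefficients `L₁ + L₂` is symmetric in `i, j`, while swapping `i` and `j` changes
`L₁L₂` by exactly `(c_i - c_j)x(x-1)`, which the term `x(x-1)c₁` compensates.
-/

open Polynomial Finset

namespace Polynomial

variable {R : Type*} [CommRing R]

noncomputable def firstOrderOp (c e : R) (q : R[X]) : R[X] :=
  X * (X - 1) * derivative q - (C c * (X - 1) + C e) * q

theorem firstOrderOp_comp_comm (c₁ c₂ e : R) (q : R[X]) :
    firstOrderOp (c₂ + 1) (e + 1) (firstOrderOp c₁ e q)
      = firstOrderOp (c₁ + 1) (e + 1) (firstOrderOp c₂ e q) := by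
  simp only [firstOrderOp, C_add, C_1, derivative_sub, derivative_mul, derivative_add,
    derivative_X, derivative_one, derivative_C]
  ring

end Polynomial

/-- The tuple `1_a`, as a function of the coordinate index `s`. -/
def prefixOnes (a s : ℕ) : ℝ := if 1 ≤ s ∧ s ≤ a then 1 else 0

/-- `l` with the conventions `l 0 = k` and `l (r + 1) = 0`. -/
def extendParams (r : ℕ) (l : ℕ → ℝ) (k : ℝ) (s : ℕ) : ℝ :=
  if s = 0 then k else if s = r + 1 then 0 else l s

def opCoeff (r : ℕ) (m l : ℕ → ℝ) (k : ℝ) (a : ℕ) : ℝ :=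
  k + (∑ s ∈ Icc 1 a, m s) - extendParams r l k a + extendParams r l k (a + 1) + a

theorem extendParams_add_prefixOnes {r a b : ℕ} (l : ℕ → ℝ) (k : ℝ) (ha : a ≤ r + 1)
    (hb : b ≤ r) :
    extendParams r (fun s => l s + prefixOnes b s) (k + 1) a
      = extendParams r l k a + if a ≤ b then 1 else 0 := by
  simp only [extendParams, prefixOnes]
  split_ifs <;> first | omega | ring

theorem opCoeff_add_prefixOnes {r a b : ℕ} (m l : ℕ → ℝ) (k : ℝ) (ha : a ≤ r) (hb : b ≤ r) :
    opCoeff r m (fun s => l s + prefixOnes b s) (k + 1) a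
      = opCoeff r m l k a + if a = b then 0 else 1 := by
  unfold opCoeff
  rw [extendParams_add_prefixOnes l k (by omega) hb,
    extendParams_add_prefixOnes l k (by omega) hb]
  split_ifs <;> first | omega | ring

theorem stmt0 (r : ℕ) (m l : ℕ → ℝ) (k : ℝ) (i j : ℕ) (hi : i ≤ r) (hj : j ≤ r)
    (p : Polynomial ℝ) :
    let one : ℕ → ℕ → ℝ := fun a s => if 1 ≤ s ∧ s ≤ a then 1 else 0
    let ext : (ℕ → ℝ) → ℝ → ℕ → ℝ := fun l' k' s =>
      if s = 0 then k' else if s = r + 1 then 0 else l' s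
    let coef : (ℕ → ℝ) → ℝ → ℕ → ℝ := fun l' k' a =>
      k' + (∑ s ∈ Finset.Icc 1 a, m s) - ext l' k' a + ext l' k' (a + 1) + (a : ℝ)
    let D : (ℕ → ℝ) → ℝ → ℕ → Polynomial ℝ → Polynomial ℝ := fun l' k' a q =>
      X * (X - 1) * derivative q - (C (coef l' k' a) * (X - 1) + C (k' + 1)) * q
    D (fun s => l s + one i s) (k + 1) j (D l k i p)
      = D (fun s => l s + one j s) (k + 1) i (D l k j p) := by
  intro one ext coef D
  change firstOrderOp (opCoeff r m (fun s => l s + prefixOnes i s) (k + 1) j) (k + 1 + 1)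
        (firstOrderOp (opCoeff r m l k i) (k + 1) p)
      = firstOrderOp (opCoeff r m (fun s => l s + prefixOnes j s) (k + 1) i) (k + 1 + 1)
        (firstOrderOp (opCoeff r m l k j) (k + 1) p)
  rw [opCoeff_add_prefixOnes m l k hj hi, opCoeff_add_prefixOnes m l k hi hj]
  by_cases hij : i = j
  · subst hij
    rfl
  · rw [if_neg hij, if_neg (Ne.symm hij)]
    exact firstOrderOp_comp_comm _ _ _ p
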